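/- Let n ≥ 4, let C be a trace-free Weyl candidate on ℝⁿ, and let u ∈ ℝⁿ be unit timelike. Then C is purely electric with respect to u (θ_u·C = C) if and only if the Bel–Debever condition Σ_b u^b C_{bcde}·(ηu)_f + Σ_b u^b C_{bcef}·(ηu)_d + Σ_b u^b C_{bcfd}·(ηu)_e = 0 holds for all indices c, d, e, f. -/
import Mathlib


open Matrix

noncomputable section

/-- The Minkowski metric `η = diag(-1, 1, …, 1)` on `ℝⁿ`. -/
def eta (n : ℕ) : Matrix (Fin n) (Fin n) ℝ :=
  Matrix.diagonal fun i => if i.val = 0 then (-1 : ℝ) else 1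

/-- The reflection `θ_u = I + 2u(ηu)ᵀ` sending `u ↦ -u` and fixing `u^⊥`. -/
def theta {n : ℕ} (u : Fin n → ℝ) : Matrix (Fin n) (Fin n) ℝ :=
  1 + (2 : ℝ) • vecMulVec u ((eta n).mulVec u)

/-- The pullback action of a matrix `Λ` on rank-4 covariant tensors:
`(Λ·C)_{abcd} = Σ C_{a'b'c'd'} Λ_{a'a} Λ_{b'b} Λ_{c'c} Λ_{d'd}`. -/
def pull {n : ℕ} (Λ : Matrix (Fin n) (Fin n) ℝ)
    (C : Fin n → Fin n → Fin n → Fin n → ℝ) : Fin n → Fin n → Fin n → Fin n → ℝ :=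
  fun a b c d => ∑ a', ∑ b', ∑ c', ∑ d',
    C a' b' c' d' * Λ a' a * Λ b' b * Λ c' c * Λ d' d

namespace BelDebeverAux

variable {n : ℕ}

/-- Contraction of `C` with `u` on the first slot. -/
def Tc (u : Fin n → ℝ) (C : Fin n → Fin n → Fin n → Fin n → ℝ) (c d e : Fin n) : ℝ :=
  ∑ b, u b * C b c d e

/-- Double contraction of `C` with `u` on the first and third slots. -/
def Ee (u : Fin n → ℝ) (C : Fin n → Fin n → Fin n → Fin n → ℝ) (b d : Fin n) : ℝ :=
  ∑ a, ∑ c, u a * u c * C a b c d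

lemma theta_apply (u : Fin n → ℝ) (x y : Fin n) :
    theta u x y = (if x = y then (1:ℝ) else 0) + 2 * (u x * (eta n).mulVec u y) := by
  by_cases hxy : x = y <;>
    simp [theta, Matrix.add_apply, Matrix.one_apply, Matrix.vecMulVec_apply, hxy] <;> ring

lemma contract_theta (u : Fin n → ℝ) (f : Fin n → ℝ) (y : Fin n) :
    ∑ x, f x * theta u x y = f y + 2 * (∑ x, u x * f x) * (eta n).mulVec u y := by
  have h : ∀ x, f x * theta u x y
      = (if x = y then f x else 0) + (u x * f x) * (2 * (eta n).mulVec u y) := by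
    intro x; rw [theta_apply]; split_ifs <;> ring
  rw [Finset.sum_congr rfl fun x _ => h x, Finset.sum_add_distrib, ← Finset.sum_mul,
    Finset.sum_ite_eq' Finset.univ y f]
  simp only [Finset.mem_univ, if_true]
  ring

lemma antisym_sum_zero (f : Fin n → Fin n → ℝ) (hf : ∀ x y, f x y = -f y x) :
    ∑ x, ∑ y, f x y = 0 := by
  have h : (∑ x, ∑ y, f x y) = -(∑ x, ∑ y, f x y) := by
    conv_lhs => rw [Finset.sum_comm]
    calc ∑ y, ∑ x, f x y = ∑ y, ∑ x, -f y x :=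
          Finset.sum_congr rfl fun y _ => Finset.sum_congr rfl fun x _ => hf x y
      _ = -(∑ y, ∑ x, f y x) := by simp
  linarith

variable (u : Fin n → ℝ) (C : Fin n → Fin n → Fin n → Fin n → ℝ)

lemma hc2 (h1 : ∀ a b c d, C b a c d = -C a b c d) (a c d : Fin n) :
    ∑ x, u x * C a x c d = -Tc u C a c d := by
  rw [Tc, ← Finset.sum_neg_distrib]
  refine Finset.sum_congr rfl fun x _ => ?_
  rw [h1 a x c d]; ring

lemma hc3 (hp : ∀ a b c d, C c d a b = C a b c d) (a b d : Fin n) :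
    ∑ x, u x * C a b x d = Tc u C d a b := by
  rw [Tc]
  refine Finset.sum_congr rfl fun x _ => ?_
  rw [hp a b x d]

lemma hc4 (h1 : ∀ a b c d, C b a c d = -C a b c d)
    (hp : ∀ a b c d, C c d a b = C a b c d) (a b c : Fin n) :
    ∑ x, u x * C a b c x = -Tc u C c a b := by
  rw [Tc, ← Finset.sum_neg_distrib]
  refine Finset.sum_congr rfl fun x _ => ?_
  rw [h1 c x a b, hp a b c x]; ring

lemma hdouble (p q : Fin n) :
    ∑ x, ∑ y, u x * (u y * C y p x q) = Ee u C p q := by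
  calc ∑ x, ∑ y, u x * (u y * C y p x q) = ∑ y, ∑ x, u x * (u y * C y p x q) :=
        Finset.sum_comm
    _ = Ee u C p q := by
        show _ = ∑ a, ∑ c, u a * u c * C a p c q
        exact Finset.sum_congr rfl fun a _ => Finset.sum_congr rfl fun c _ => by ring

lemma huT1 (h1 : ∀ a b c d, C b a c d = -C a b c d) (p q : Fin n) :
    ∑ x, u x * Tc u C x p q = 0 := by
  simp only [Tc, Finset.mul_sum]
  exact antisym_sum_zero (fun x y => u x * (u y * C y x p q))
    (fun x y => by
      show u x * (u y * C y x p q) = -(u y * (u x * C x y p q))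
      rw [h1 x y p q]; ring)

lemma huT2 (p q : Fin n) :
    ∑ x, u x * Tc u C p x q = Ee u C p q := by
  simp only [Tc, Finset.mul_sum]
  exact hdouble u C p q

lemma huT3 (h2 : ∀ a b c d, C a b d c = -C a b c d) (p q : Fin n) :
    ∑ x, u x * Tc u C p q x = -Ee u C p q := by
  simp only [Tc, Finset.mul_sum]
  calc ∑ x, ∑ y, u x * (u y * C y p q x)
      = ∑ x, ∑ y, -(u x * (u y * C y p x q)) := by
        refine Finset.sum_congr rfl fun x _ => Finset.sum_congr rfl fun y _ => ?_
        rw [h2 y p q x]; ring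
    _ = -(∑ x, ∑ y, u x * (u y * C y p x q)) := by simp
    _ = -Ee u C p q := by rw [hdouble]

lemma hEeT (hp : ∀ a b c d, C c d a b = C a b c d) (p x : Fin n) :
    Ee u C p x = ∑ a, u a * Tc u C x a p := by
  simp only [Ee, Tc, Finset.mul_sum]
  refine Finset.sum_congr rfl fun a _ => Finset.sum_congr rfl fun c _ => ?_
  rw [hp a p c x]; ring

lemma huE (h1 : ∀ a b c d, C b a c d = -C a b c d)
    (hp : ∀ a b c d, C c d a b = C a b c d) (p : Fin n) :
    ∑ x, u x * Ee u C p x = 0 := by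
  calc ∑ x, u x * Ee u C p x = ∑ x, ∑ a, u x * (u a * Tc u C x a p) := by
        refine Finset.sum_congr rfl fun x _ => ?_
        rw [hEeT u C hp p x, Finset.mul_sum]
    _ = ∑ a, ∑ x, u x * (u a * Tc u C x a p) := Finset.sum_comm
    _ = ∑ a, u a * ∑ x, u x * Tc u C x a p := by
        refine Finset.sum_congr rfl fun a _ => ?_
        rw [Finset.mul_sum]
        exact Finset.sum_congr rfl fun x _ => by ring
    _ = 0 := by
        refine Finset.sum_eq_zero fun a _ => ?_
        rw [huT1 u C h1 a p, mul_zero]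

lemma hEsymm (hp : ∀ a b c d, C c d a b = C a b c d) (p q : Fin n) :
    Ee u C p q = Ee u C q p := by
  calc Ee u C p q = ∑ a, ∑ c, u a * u c * C a p c q := rfl
    _ = ∑ a, ∑ c, u c * u a * C c q a p := by
        refine Finset.sum_congr rfl fun a _ => Finset.sum_congr rfl fun c _ => ?_
        rw [hp c q a p]; ring
    _ = ∑ c, ∑ a, u c * u a * C c q a p := Finset.sum_comm
    _ = Ee u C q p := rfl

/-- The master expansion of `pull (theta u) C`. -/
lemma hexp (h1 : ∀ a b c d, C b a c d = -C a b c d)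
    (h2 : ∀ a b c d, C a b d c = -C a b c d)
    (hp : ∀ a b c d, C c d a b = C a b c d) (a b c d : Fin n) :
    pull (theta u) C a b c d =
      C a b c d
      + 2 * Tc u C b c d * (eta n).mulVec u a
      - 2 * Tc u C a c d * (eta n).mulVec u b
      + 2 * Tc u C d a b * (eta n).mulVec u c
      - 2 * Tc u C c a b * (eta n).mulVec u d
      + 4 * Ee u C d b * (eta n).mulVec u a * (eta n).mulVec u c
      - 4 * Ee u C c b * (eta n).mulVec u a * (eta n).mulVec u d
      - 4 * Ee u C d a * (eta n).mulVec u b * (eta n).mulVec u c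
      + 4 * Ee u C c a * (eta n).mulVec u b * (eta n).mulVec u d := by
  have h0 : pull (theta u) C a b c d
      = ∑ a', (∑ b', (∑ c', (∑ d', C a' b' c' d' * theta u d' d) * theta u c' c)
          * theta u b' b) * theta u a' a := by
    simp only [pull, Finset.sum_mul]
    exact Finset.sum_congr rfl fun a' _ => Finset.sum_congr rfl fun b' _ =>
      Finset.sum_congr rfl fun c' _ => Finset.sum_congr rfl fun d' _ => by ring
  have s4 : ∀ a' b' c', (∑ d', C a' b' c' d' * theta u d' d)
      = C a' b' c' d - 2 * Tc u C c' a' b' * (eta n).mulVec u d := by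
    intro a' b' c'
    rw [contract_theta u (fun x => C a' b' c' x) d, hc4 u C h1 hp a' b' c']
    ring
  have s3 : ∀ a' b', (∑ c', (∑ d', C a' b' c' d' * theta u d' d) * theta u c' c)
      = C a' b' c d - 2 * Tc u C c a' b' * (eta n).mulVec u d
        + 2 * Tc u C d a' b' * (eta n).mulVec u c := by
    intro a' b'
    simp only [s4]
    rw [contract_theta u
      (fun x => C a' b' x d - 2 * Tc u C x a' b' * (eta n).mulVec u d) c]
    have hsum : (∑ x, u x * (C a' b' x d - 2 * Tc u C x a' b' * (eta n).mulVec u d))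
        = Tc u C d a' b' := by
      calc ∑ x, u x * (C a' b' x d - 2 * Tc u C x a' b' * (eta n).mulVec u d)
          = ∑ x, (u x * C a' b' x d
              - (2 * (eta n).mulVec u d) * (u x * Tc u C x a' b')) :=
            Finset.sum_congr rfl fun x _ => by ring
        _ = (∑ x, u x * C a' b' x d)
              - (2 * (eta n).mulVec u d) * (∑ x, u x * Tc u C x a' b') := by
            rw [Finset.sum_sub_distrib, ← Finset.mul_sum]
        _ = Tc u C d a' b' := by
            rw [hc3 u C hp a' b' d, huT1 u C h1 a' b']; ring
    rw [hsum]; try ring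
  have s2 : ∀ a', (∑ b', (∑ c', (∑ d', C a' b' c' d' * theta u d' d) * theta u c' c)
        * theta u b' b)
      = C a' b c d - 2 * Tc u C c a' b * (eta n).mulVec u d
        + 2 * Tc u C d a' b * (eta n).mulVec u c
        - 2 * Tc u C a' c d * (eta n).mulVec u b
        + 4 * Ee u C c a' * (eta n).mulVec u b * (eta n).mulVec u d
        - 4 * Ee u C d a' * (eta n).mulVec u b * (eta n).mulVec u c := by
    intro a'
    simp only [s3]
    rw [contract_theta u
      (fun x => C a' x c d - 2 * Tc u C c a' x * (eta n).mulVec u d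
        + 2 * Tc u C d a' x * (eta n).mulVec u c) b]
    have hsum : (∑ x, u x * (C a' x c d - 2 * Tc u C c a' x * (eta n).mulVec u d
          + 2 * Tc u C d a' x * (eta n).mulVec u c))
        = -Tc u C a' c d + 2 * Ee u C c a' * (eta n).mulVec u d
          - 2 * Ee u C d a' * (eta n).mulVec u c := by
      calc ∑ x, u x * (C a' x c d - 2 * Tc u C c a' x * (eta n).mulVec u d
              + 2 * Tc u C d a' x * (eta n).mulVec u c)
          = ∑ x, (u x * C a' x c d
              - (2 * (eta n).mulVec u d) * (u x * Tc u C c a' x)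
              + (2 * (eta n).mulVec u c) * (u x * Tc u C d a' x)) :=
            Finset.sum_congr rfl fun x _ => by ring
        _ = (∑ x, u x * C a' x c d)
              - (2 * (eta n).mulVec u d) * (∑ x, u x * Tc u C c a' x)
              + (2 * (eta n).mulVec u c) * (∑ x, u x * Tc u C d a' x) := by
            rw [Finset.sum_add_distrib, Finset.sum_sub_distrib, ← Finset.mul_sum,
              ← Finset.mul_sum]
        _ = _ := by
            rw [hc2 u C h1 a' c d, huT3 u C h2 c a', huT3 u C h2 d a']; ring
    rw [hsum]; ring
  rw [h0]
  simp only [s2]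
  rw [contract_theta u
    (fun x => C x b c d - 2 * Tc u C c x b * (eta n).mulVec u d
      + 2 * Tc u C d x b * (eta n).mulVec u c
      - 2 * Tc u C x c d * (eta n).mulVec u b
      + 4 * Ee u C c x * (eta n).mulVec u b * (eta n).mulVec u d
      - 4 * Ee u C d x * (eta n).mulVec u b * (eta n).mulVec u c) a]
  have hsum : (∑ x, u x * (C x b c d - 2 * Tc u C c x b * (eta n).mulVec u d
        + 2 * Tc u C d x b * (eta n).mulVec u c
        - 2 * Tc u C x c d * (eta n).mulVec u b
        + 4 * Ee u C c x * (eta n).mulVec u b * (eta n).mulVec u d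
        - 4 * Ee u C d x * (eta n).mulVec u b * (eta n).mulVec u c))
      = Tc u C b c d - 2 * Ee u C c b * (eta n).mulVec u d
        + 2 * Ee u C d b * (eta n).mulVec u c := by
    calc ∑ x, u x * (C x b c d - 2 * Tc u C c x b * (eta n).mulVec u d
            + 2 * Tc u C d x b * (eta n).mulVec u c
            - 2 * Tc u C x c d * (eta n).mulVec u b
            + 4 * Ee u C c x * (eta n).mulVec u b * (eta n).mulVec u d
            - 4 * Ee u C d x * (eta n).mulVec u b * (eta n).mulVec u c)
        = ∑ x, (u x * C x b c d
            - (2 * (eta n).mulVec u d) * (u x * Tc u C c x b)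
            + (2 * (eta n).mulVec u c) * (u x * Tc u C d x b)
            - (2 * (eta n).mulVec u b) * (u x * Tc u C x c d)
            + (4 * (eta n).mulVec u b * (eta n).mulVec u d) * (u x * Ee u C c x)
            - (4 * (eta n).mulVec u b * (eta n).mulVec u c) * (u x * Ee u C d x)) :=
          Finset.sum_congr rfl fun x _ => by ring
      _ = (∑ x, u x * C x b c d)
            - (2 * (eta n).mulVec u d) * (∑ x, u x * Tc u C c x b)
            + (2 * (eta n).mulVec u c) * (∑ x, u x * Tc u C d x b)
            - (2 * (eta n).mulVec u b) * (∑ x, u x * Tc u C x c d)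
            + (4 * (eta n).mulVec u b * (eta n).mulVec u d) * (∑ x, u x * Ee u C c x)
            - (4 * (eta n).mulVec u b * (eta n).mulVec u c) * (∑ x, u x * Ee u C d x) := by
          rw [Finset.sum_sub_distrib, Finset.sum_add_distrib, Finset.sum_sub_distrib,
            Finset.sum_add_distrib, Finset.sum_sub_distrib, ← Finset.mul_sum,
            ← Finset.mul_sum, ← Finset.mul_sum, ← Finset.mul_sum, ← Finset.mul_sum]
      _ = _ := by
          rw [show (∑ x, u x * C x b c d) = Tc u C b c d from rfl,
            huT2 u C c b, huT2 u C d b, huT1 u C h1 c d,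
            huE u C h1 hp c, huE u C h1 hp d]
          ring
  rw [hsum]; ring

end BelDebeverAux

open BelDebeverAux

/-- Bel–Debever criterion for a purely electric Weyl tensor: a trace-free Weyl
candidate `C` is PE with respect to a unit timelike `u` (`θ_u·C = C`) iff
`u^b C_{bc[de} u_{f]} = 0`. -/
theorem stmt6 {n : ℕ} (hn : 4 ≤ n)
    (C : Fin n → Fin n → Fin n → Fin n → ℝ)
    (hanti1 : ∀ a b c d, C b a c d = -C a b c d)
    (hanti2 : ∀ a b c d, C a b d c = -C a b c d)
    (hpair : ∀ a b c d, C c d a b = C a b c d)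
    (hbianchi : ∀ a b c d, C a b c d + C a c d b + C a d b c = 0)
    (htracefree : ∀ b d, ∑ a, ∑ c, eta n a c * C a b c d = 0)
    (u : Fin n → ℝ) (hu : u ⬝ᵥ (eta n).mulVec u = -1) :
    pull (theta u) C = C ↔
      ∀ c d e f,
        (∑ b, u b * C b c d e) * ((eta n).mulVec u f)
        + (∑ b, u b * C b c e f) * ((eta n).mulVec u d)
        + (∑ b, u b * C b c f d) * ((eta n).mulVec u e) = 0 := by
  have hv : (∑ x, u x * (eta n).mulVec u x) = -1 := by
    simpa [dotProduct] using hu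
  have hex := fun a b c d => hexp u C hanti1 hanti2 hpair a b c d
  constructor
  · intro hPE
    have hΔ : ∀ a b c d,
        2 * Tc u C b c d * (eta n).mulVec u a
        - 2 * Tc u C a c d * (eta n).mulVec u b
        + 2 * Tc u C d a b * (eta n).mulVec u c
        - 2 * Tc u C c a b * (eta n).mulVec u d
        + 4 * Ee u C d b * (eta n).mulVec u a * (eta n).mulVec u c
        - 4 * Ee u C c b * (eta n).mulVec u a * (eta n).mulVec u d
        - 4 * Ee u C d a * (eta n).mulVec u b * (eta n).mulVec u c
        + 4 * Ee u C c a * (eta n).mulVec u b * (eta n).mulVec u d = 0 := by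
      intro a b c d
      have h1 := hex a b c d
      have h2 : pull (theta u) C a b c d = C a b c d := by rw [hPE]
      linarith
    have hT : ∀ b c d, Tc u C b c d
        = Ee u C c b * (eta n).mulVec u d - Ee u C d b * (eta n).mulVec u c := by
      intro b c d
      have hzero : (∑ a, u a * (2 * Tc u C b c d * (eta n).mulVec u a
          - 2 * Tc u C a c d * (eta n).mulVec u b
          + 2 * Tc u C d a b * (eta n).mulVec u c
          - 2 * Tc u C c a b * (eta n).mulVec u d
          + 4 * Ee u C d b * (eta n).mulVec u a * (eta n).mulVec u c
          - 4 * Ee u C c b * (eta n).mulVec u a * (eta n).mulVec u d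
          - 4 * Ee u C d a * (eta n).mulVec u b * (eta n).mulVec u c
          + 4 * Ee u C c a * (eta n).mulVec u b * (eta n).mulVec u d)) = 0 :=
        Finset.sum_eq_zero fun a _ => by rw [hΔ a b c d, mul_zero]
      have hcompute : (∑ a, u a * (2 * Tc u C b c d * (eta n).mulVec u a
          - 2 * Tc u C a c d * (eta n).mulVec u b
          + 2 * Tc u C d a b * (eta n).mulVec u c
          - 2 * Tc u C c a b * (eta n).mulVec u d
          + 4 * Ee u C d b * (eta n).mulVec u a * (eta n).mulVec u c
          - 4 * Ee u C c b * (eta n).mulVec u a * (eta n).mulVec u d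
          - 4 * Ee u C d a * (eta n).mulVec u b * (eta n).mulVec u c
          + 4 * Ee u C c a * (eta n).mulVec u b * (eta n).mulVec u d))
          = -(2 * Tc u C b c d) - 2 * Ee u C d b * (eta n).mulVec u c
            + 2 * Ee u C c b * (eta n).mulVec u d := by
        calc ∑ a, u a * (2 * Tc u C b c d * (eta n).mulVec u a
              - 2 * Tc u C a c d * (eta n).mulVec u b
              + 2 * Tc u C d a b * (eta n).mulVec u c
              - 2 * Tc u C c a b * (eta n).mulVec u d
              + 4 * Ee u C d b * (eta n).mulVec u a * (eta n).mulVec u c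
              - 4 * Ee u C c b * (eta n).mulVec u a * (eta n).mulVec u d
              - 4 * Ee u C d a * (eta n).mulVec u b * (eta n).mulVec u c
              + 4 * Ee u C c a * (eta n).mulVec u b * (eta n).mulVec u d)
            = ∑ a, ((2 * Tc u C b c d) * (u a * (eta n).mulVec u a)
              - (2 * (eta n).mulVec u b) * (u a * Tc u C a c d)
              + (2 * (eta n).mulVec u c) * (u a * Tc u C d a b)
              - (2 * (eta n).mulVec u d) * (u a * Tc u C c a b)
              + (4 * Ee u C d b * (eta n).mulVec u c) * (u a * (eta n).mulVec u a)
              - (4 * Ee u C c b * (eta n).mulVec u d) * (u a * (eta n).mulVec u a)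
              - (4 * (eta n).mulVec u b * (eta n).mulVec u c) * (u a * Ee u C d a)
              + (4 * (eta n).mulVec u b * (eta n).mulVec u d) * (u a * Ee u C c a)) :=
              Finset.sum_congr rfl fun a _ => by ring
          _ = (2 * Tc u C b c d) * (∑ a, u a * (eta n).mulVec u a)
              - (2 * (eta n).mulVec u b) * (∑ a, u a * Tc u C a c d)
              + (2 * (eta n).mulVec u c) * (∑ a, u a * Tc u C d a b)
              - (2 * (eta n).mulVec u d) * (∑ a, u a * Tc u C c a b)
              + (4 * Ee u C d b * (eta n).mulVec u c) * (∑ a, u a * (eta n).mulVec u a)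
              - (4 * Ee u C c b * (eta n).mulVec u d) * (∑ a, u a * (eta n).mulVec u a)
              - (4 * (eta n).mulVec u b * (eta n).mulVec u c) * (∑ a, u a * Ee u C d a)
              + (4 * (eta n).mulVec u b * (eta n).mulVec u d) * (∑ a, u a * Ee u C c a) := by
              rw [Finset.sum_add_distrib, Finset.sum_sub_distrib, Finset.sum_sub_distrib,
                Finset.sum_add_distrib, Finset.sum_sub_distrib, Finset.sum_add_distrib,
                Finset.sum_sub_distrib, ← Finset.mul_sum, ← Finset.mul_sum, ← Finset.mul_sum,
                ← Finset.mul_sum, ← Finset.mul_sum, ← Finset.mul_sum, ← Finset.mul_sum,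
                ← Finset.mul_sum]
          _ = _ := by
              rw [hv, huT1 u C hanti1 c d, huT2 u C d b, huT2 u C c b,
                huE u C hanti1 hpair d, huE u C hanti1 hpair c]
              ring
      linarith [hzero, hcompute]
    intro c d e f
    show Tc u C c d e * ((eta n).mulVec u f) + Tc u C c e f * ((eta n).mulVec u d)
      + Tc u C c f d * ((eta n).mulVec u e) = 0
    rw [hT c d e, hT c e f, hT c f d]; ring
  · intro hBD
    have hT' : ∀ c d e, Tc u C c d e
        = Ee u C c d * (eta n).mulVec u e - Ee u C c e * (eta n).mulVec u d := by
      intro c d e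
      have hzero : (∑ f, u f * (Tc u C c d e * (eta n).mulVec u f
          + Tc u C c e f * (eta n).mulVec u d
          + Tc u C c f d * (eta n).mulVec u e)) = 0 :=
        Finset.sum_eq_zero fun f _ => by
          have h : Tc u C c d e * (eta n).mulVec u f
              + Tc u C c e f * (eta n).mulVec u d
              + Tc u C c f d * (eta n).mulVec u e = 0 := hBD c d e f
          rw [h, mul_zero]
      have hcompute : (∑ f, u f * (Tc u C c d e * (eta n).mulVec u f
          + Tc u C c e f * (eta n).mulVec u d
          + Tc u C c f d * (eta n).mulVec u e))
          = -(Tc u C c d e) - Ee u C c e * (eta n).mulVec u d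
            + Ee u C c d * (eta n).mulVec u e := by
        calc ∑ f, u f * (Tc u C c d e * (eta n).mulVec u f
              + Tc u C c e f * (eta n).mulVec u d
              + Tc u C c f d * (eta n).mulVec u e)
            = ∑ f, (Tc u C c d e * (u f * (eta n).mulVec u f)
              + ((eta n).mulVec u d) * (u f * Tc u C c e f)
              + ((eta n).mulVec u e) * (u f * Tc u C c f d)) :=
              Finset.sum_congr rfl fun f _ => by ring
          _ = Tc u C c d e * (∑ f, u f * (eta n).mulVec u f)
              + ((eta n).mulVec u d) * (∑ f, u f * Tc u C c e f)
              + ((eta n).mulVec u e) * (∑ f, u f * Tc u C c f d) := by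
              rw [Finset.sum_add_distrib, Finset.sum_add_distrib, ← Finset.mul_sum,
                ← Finset.mul_sum, ← Finset.mul_sum]
          _ = _ := by
              rw [hv, huT3 u C hanti2 c e, huT2 u C c d]; ring
      linarith [hzero, hcompute]
    funext a b c d
    rw [hex a b c d, hT' b c d, hT' a c d, hT' d a b, hT' c a b,
      hEsymm u C hpair b c, hEsymm u C hpair b d, hEsymm u C hpair a d,
      hEsymm u C hpair a c]
    ring

end
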